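/- arXiv:1908.09574 — 2 statements merged into one kernel-verified Lean document; each statement's English description precedes it below -/
import Mathlib

section
/- Consider the safe semi-supervised max-min estimator: given a finite set of candidate classifiers H_p, a supervised baseline h^SVM, unlabeled points u₁,...,u_m with (unknown) true labels Y_m, define J(h, Y) = Σᵢ [1_{h(uᵢ)=yᵢ}·1_{h^SVM(uᵢ)≠yᵢ} − 1_{h(uᵢ)≠yᵢ}·1_{h^SVM(uᵢ)=yᵢ}], and let h^SSL = argmax_{h ∈ H_p} min_{Y ∈ Y_p} J(h,Y), where Y_p = {(h(u₁),...,h(u_m)) : h ∈ H_p}. If the true labeling Y_m belongs to Y_p and h^SVM ∈ H_p, then the accuracy of h^SSL on u₁,...,u_m is at least the accuracy of h^SVM, i.e., Σᵢ 1_{h^SSL(uᵢ)=yᵢ} ≥ Σᵢ 1_{h^SVM(uᵢ)=yᵢ}. -/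
open Finset
open scoped Classical

/-- Safety of the S4VM max-min estimator (Li & Zhou): if the true labeling of the
unlabeled points belongs to the set of candidate labelings `Y_p` realized by `H_p`, and
the baseline `h^SVM ∈ H_p`, then the max-min solution `h^SSL` has accuracy on the
unlabeled points at least that of `h^SVM`. -/
theorem s4vm_safety {U : Type*} (m : ℕ)
    (Hp : Finset (U → ℤ)) (hHp : Hp.Nonempty)
    (hsvm : U → ℤ) (hsvm_mem : hsvm ∈ Hp)
    (u : Fin m → U) (y : Fin m → ℤ) (hy : ∀ i, y i = 1 ∨ y i = -1)
    (J : (U → ℤ) → (Fin m → ℤ) → ℤ)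
    (hJ : ∀ h Y, J h Y = ∑ i : Fin m,
      ((if h (u i) = Y i ∧ hsvm (u i) ≠ Y i then (1 : ℤ) else 0) -
        (if h (u i) ≠ Y i ∧ hsvm (u i) = Y i then (1 : ℤ) else 0)))
    (Yp : Finset (Fin m → ℤ)) (hYp : Yp = Hp.image (fun h i => h (u i)))
    (hYpne : Yp.Nonempty)
    (htrue : (fun i => y i) ∈ Yp)
    (hssl : U → ℤ) (hssl_mem : hssl ∈ Hp)
    (hargmax : ∀ h ∈ Hp, Yp.inf' hYpne (J h) ≤ Yp.inf' hYpne (J hssl)) :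
    ∑ i : Fin m, (if hsvm (u i) = y i then (1 : ℤ) else 0) ≤
      ∑ i : Fin m, (if hssl (u i) = y i then (1 : ℤ) else 0) := by
  have hsvm0 : ∀ Y, J hsvm Y = 0 := by
    intro Y
    rw [hJ]
    apply Finset.sum_eq_zero
    intro i _
    by_cases h : hsvm (u i) = Y i <;> simp [h]
  have h1 : (0 : ℤ) ≤ Yp.inf' hYpne (J hssl) := by
    have := hargmax hsvm hsvm_mem
    have h2 : Yp.inf' hYpne (J hsvm) = 0 := by
      obtain ⟨Y, hY⟩ := hYpne
      apply le_antisymm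
      · exact le_trans (Finset.inf'_le _ hY) (le_of_eq (hsvm0 Y))
      · exact Finset.le_inf' _ _ fun Y _ => (hsvm0 Y).ge
    linarith
  have h3 : Yp.inf' hYpne (J hssl) ≤ J hssl (fun i => y i) :=
    Finset.inf'_le _ htrue
  have h4 : J hssl (fun i => y i) =
      (∑ i : Fin m, (if hssl (u i) = y i then (1 : ℤ) else 0)) -
      (∑ i : Fin m, (if hsvm (u i) = y i then (1 : ℤ) else 0)) := by
    rw [hJ, ← Finset.sum_sub_distrib]
    apply Finset.sum_congr rfl
    intro i _
    by_cases ha : hssl (u i) = y i <;> by_cases hb : hsvm (u i) = y i <;>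
      simp [ha, hb]
  linarith
end

section
/- Consider the assumption-free safe SSL estimator of Loog: let L(θ | X, p) be the expected log-likelihood of a parametric joint model evaluated on a finite point set with posterior vector p, and C(θ, θ^SL | X, p) = L(θ|X,p) − L(θ^SL|X,p) the contrastive likelihood. If θ^SSL = argmax_θ min_{p_m ∈ [0,1]^m} C(θ, θ^SL | X, (p_n, p_m)) where p_n are the known labels of the labeled points, and θ^SL is in the feasible set Θ, then L(θ^SL | X, Y) ≤ L(θ^SSL | X, Y) where Y is the true labeling (true posteriors). In abstract form: if F : Θ × [0,1]^m → ℝ satisfies F(θ^SL, p) = 0 for all p, and θ^SSL maximizes θ ↦ inf_{p} F(θ, p) over Θ, then F(θ^SSL, p*) ≥ 0 for every p* ∈ [0,1]^m. -/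
/-- Abstract form of Loog's contrastive pessimistic likelihood guarantee: if the
contrastive likelihood `F(θ, p)` (relative to the supervised solution `θ^SL`) vanishes
identically at `θ^SL`, and `θ^SSL` maximizes the worst case `θ ↦ inf_{p ∈ [0,1]^m} F(θ,p)`,
then `F(θ^SSL, p*) ≥ 0` for every posterior vector `p* ∈ [0,1]^m` — in particular for the
true labeling, so the semi-supervised likelihood is never worse than the supervised one. -/
theorem contrastive_pessimistic_safety {Θ : Type*} [Nonempty Θ] (m : ℕ)
    (F : Θ → (Fin m → Set.Icc (0 : ℝ) 1) → ℝ)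
    (θSL : Θ) (hSL : ∀ p, F θSL p = 0)
    (hbdd : ∀ θ, BddBelow (Set.range (F θ)))
    (θSSL : Θ)
    (hmax : (⨅ p, F θSSL p) = ⨆ θ, ⨅ p, F θ p) :
    ∀ pstar : Fin m → Set.Icc (0 : ℝ) 1, 0 ≤ F θSSL pstar := by
  intro pstar
  have hne : Nonempty (Fin m → Set.Icc (0 : ℝ) 1) :=
    ⟨fun _ => ⟨0, by norm_num⟩⟩
  have hSLinf : (⨅ p, F θSL p) = 0 := by
    simp [hSL]
  have hsup_nonneg : 0 ≤ ⨆ θ, ⨅ p, F θ p := by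
    by_cases hb : BddAbove (Set.range fun θ => ⨅ p, F θ p)
    · calc (0 : ℝ) = ⨅ p, F θSL p := hSLinf.symm
        _ ≤ ⨆ θ, ⨅ p, F θ p := le_ciSup hb θSL
    · rw [Real.iSup_of_not_bddAbove hb]
  have hle : (⨅ p, F θSSL p) ≤ F θSSL pstar := ciInf_le (hbdd θSSL) pstar
  linarith [hmax ▸ hle, hsup_nonneg]
end
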